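/- Let ρ(t) = t + higher order terms be a formal power series reversed by the rotation t ↦ ωt where ω = c⁻², and let ρ^{1/2} denote the formal square root iterate of ρ (the unique series t + … with ρ^{1/2} ∘ ρ^{1/2} = ρ). Then the map F(z₁,z₂) = (z₁ρ(p)/ρ^{1/2}(p), z₂ρ^{1/2}(p)/p), p = z₁z₂, is reversed by J_c(z₁,z₂) = (cz₂, cz₁). -/

import Mathlib

noncomputable section

def compP (f g : PowerSeries ℂ) : PowerSeries ℂ :=
  PowerSeries.mk fun n =>
    ∑ j ∈ Finset.range (n + 1), PowerSeries.coeff j f * PowerSeries.coeff n (g ^ j)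

def iterP (g : PowerSeries ℂ) : ℕ → PowerSeries ℂ
  | 0 => PowerSeries.X
  | m + 1 => compP g (iterP g m)

abbrev FormalMap (n : ℕ) := Fin n → MvPowerSeries (Fin n) ℂ

def degreeOf {n : ℕ} (d : Fin n →₀ ℕ) : ℕ := d.sum fun _ m => m

def substM {n : ℕ} (G : FormalMap n) (f : MvPowerSeries (Fin n) ℂ) :
    MvPowerSeries (Fin n) ℂ :=
  fun d =>
    ∑ e ∈ Finset.Iic (Finsupp.equivFunOnFinite.symm fun _ => degreeOf d),
      MvPowerSeries.coeff e f * MvPowerSeries.coeff d (∏ i, G i ^ e i)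

def compM {n : ℕ} (F G : FormalMap n) : FormalMap n := fun i => substM G (F i)

def idM (n : ℕ) : FormalMap n := fun i => MvPowerSeries.X i

def iterM {n : ℕ} (F : FormalMap n) : ℕ → FormalMap n
  | 0 => idM n
  | m + 1 => compM F (iterM F m)

def linMatrix {n : ℕ} (F : FormalMap n) : Matrix (Fin n) (Fin n) ℂ :=
  fun i j => MvPowerSeries.coeff (Finsupp.single j 1) (F i)

def linMap {n : ℕ} (F : FormalMap n) : FormalMap n :=
  fun i => ∑ j, MvPowerSeries.C (linMatrix F i j) * MvPowerSeries.X j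

def substPM (q : MvPowerSeries (Fin 2) ℂ) (φ : PowerSeries ℂ) : MvPowerSeries (Fin 2) ℂ :=
  fun d =>
    ∑ j ∈ Finset.range (degreeOf d + 1),
      PowerSeries.coeff j φ * MvPowerSeries.coeff d (q ^ j)

def pXY : MvPowerSeries (Fin 2) ℂ := MvPowerSeries.X 0 * MvPowerSeries.X 1

def Mmap (φ ψ : PowerSeries ℂ) : FormalMap 2 :=
  ![MvPowerSeries.X 0 * substPM pXY φ, MvPowerSeries.X 1 * substPM pXY ψ]

/-!
Write `ρ = X * u`, `h = ρ^{1/2} = X * v` and `R t = ω t` with `ω = c⁻²`. Reversibility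
`ρ ∘ R ∘ ρ = R` says that `g = R⁻¹ ∘ h ∘ R` squares to `R⁻¹ ∘ ρ ∘ R = ρ⁻¹`; half-iterates tangent
to the identity are unique, so `g = h⁻¹`, i.e. `h ∘ R ∘ h = R`. Dividing by `X`, the two
reversibility relations read `u · u(ωρ) = 1` and `v · v(ωh) = 1`.

The product of the coordinates of `J_c ∘ F` is `a(z₁z₂)` with `a = c²ρ`, the compositional inverse
of `ωρ`. Hence `F ∘ J_c ∘ F = J_c` reduces to the one-variable identities `v · φ(a) = 1` and
`φ · v(a) = 1` for `φ = u / v`, which follow from the two relations above and `v · v(h) = u`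
(that is, `h ∘ h = ρ`) after substituting `a`.
-/

namespace PowerSeries

variable {R : Type*} [CommRing R]

theorem coeff_subst_eq_sum_range {g : R⟦X⟧} (hg : constantCoeff g = 0) (f : R⟦X⟧) (n : ℕ) :
    coeff n (subst g f) = ∑ j ∈ Finset.range (n + 1), coeff j f * coeff n (g ^ j) := by
  rw [coeff_subst' (HasSubst.of_constantCoeff_zero' hg)]
  refine finsum_eq_sum_of_support_subset _ fun j hj => ?_
  rw [Finset.coe_range, Set.mem_Iio, Nat.lt_succ_iff]
  by_contra! hnj
  exact hj <| smul_eq_zero_of_right _ <| coeff_of_lt_order n <|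
    (Nat.cast_lt.mpr hnj).trans_le (le_order_pow_of_constantCoeff_eq_zero j hg)

theorem subst_subst {g k : R⟦X⟧} (hg : constantCoeff g = 0) (hk : constantCoeff k = 0)
    (f : R⟦X⟧) : subst k (subst g f) = subst (subst k g) f :=
  subst_comp_subst_apply (HasSubst.of_constantCoeff_zero' hg)
    (HasSubst.of_constantCoeff_zero' hk) f

theorem subst_one {τ : Type*} (a : MvPowerSeries τ R) : subst a (1 : R⟦X⟧) = 1 := by
  simpa using subst_C (a := a) (1 : R)

theorem C_mul_subst {g : R⟦X⟧} (hg : constantCoeff g = 0) (a : R) (f : R⟦X⟧) :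
    subst g (C a * f) = C a * subst g f := by
  rw [subst_mul (HasSubst.of_constantCoeff_zero' hg), subst_C]
  rfl

theorem X_mul_subst {g : R⟦X⟧} (hg : constantCoeff g = 0) (f : R⟦X⟧) :
    subst g (X * f) = g * subst g f := by
  rw [subst_mul (HasSubst.of_constantCoeff_zero' hg), subst_X (HasSubst.of_constantCoeff_zero' hg)]

theorem subst_C_mul_X {g : R⟦X⟧} (hg : constantCoeff g = 0) (a : R) :
    subst g (C a * X) = C a * g := by
  rw [C_mul_subst hg, subst_X (HasSubst.of_constantCoeff_zero' hg)]

theorem coeff_one_subst {g : R⟦X⟧} (hg : constantCoeff g = 0) (f : R⟦X⟧) :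
    coeff 1 (subst g f) = coeff 1 f * coeff 1 g := by
  simp [coeff_subst_eq_sum_range hg, Finset.sum_range_succ]

theorem C_inv_mul_C_mul (ω : Rˣ) (f : R⟦X⟧) : C (↑ω⁻¹ : R) * (C (ω : R) * f) = f := by
  rw [← mul_assoc, ← map_mul, Units.inv_mul, map_one, one_mul]

theorem C_mul_C_inv_mul (ω : Rˣ) (f : R⟦X⟧) : C (ω : R) * (C (↑ω⁻¹ : R) * f) = f := by
  rw [← mul_assoc, ← map_mul, Units.mul_inv, map_one, one_mul]

theorem coeff_pow_eq_of_coeff_eq {s t : R⟦X⟧} (hs : constantCoeff s = 0)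
    (ht : constantCoeff t = 0) {n : ℕ} (hst : ∀ m < n, coeff m s = coeff m t) {j : ℕ}
    (hj : 2 ≤ j) : coeff n (s ^ j) = coeff n (t ^ j) := by
  have hdiff : X ^ n ∣ s - t :=
    X_pow_dvd_iff.mpr fun m hm => by rw [map_sub, hst m hm, sub_self]
  have hgeom : X ∣ ∑ i ∈ Finset.range j, s ^ i * t ^ (j - 1 - i) := by
    refine Finset.dvd_sum fun i _ => ?_
    rcases Nat.eq_zero_or_pos i with rfl | hi
    · simpa using dvd_pow (X_dvd_iff.mpr ht) (by omega)
    · exact (dvd_pow (X_dvd_iff.mpr hs) hi.ne').mul_right _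
  have hpow : X ^ (n + 1) ∣ s ^ j - t ^ j := by
    rw [← geom_sum₂_mul, pow_succ']
    exact mul_dvd_mul hgeom hdiff
  exact sub_eq_zero.mp (by simpa using X_pow_dvd_iff.mp hpow n n.lt_succ_self)

theorem coeff_pow_self {s : R⟦X⟧} (hs : constantCoeff s = 0) (n : ℕ) :
    coeff n (s ^ n) = coeff 1 s ^ n := by
  obtain ⟨s', rfl⟩ := X_dvd_iff.mpr hs
  simp [mul_pow, coeff_X_pow_mul']

theorem coeff_subst_self {s : R⟦X⟧} (hs0 : constantCoeff s = 0) (hs1 : coeff 1 s = 1)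
    (n : ℕ) : coeff (n + 2) (subst s s) = 2 * coeff (n + 2) s +
      ∑ i ∈ Finset.range n, coeff (i + 2) s * coeff (n + 2) (s ^ (i + 2)) := by
  rw [coeff_subst_eq_sum_range hs0, Finset.sum_range_succ, Finset.sum_range_succ',
    Finset.sum_range_succ', coeff_pow_self hs0, hs1]
  simp only [zero_add, pow_one, one_pow, mul_one, one_mul, coeff_zero_eq_constantCoeff, hs0,
    zero_mul]
  ring

theorem eq_of_subst_self_eq_subst_self [IsAddTorsionFree R] {s t : R⟦X⟧}
    (hs0 : constantCoeff s = 0) (ht0 : constantCoeff t = 0) (hs1 : coeff 1 s = 1)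
    (ht1 : coeff 1 t = 1) (h : subst s s = subst t t) : s = t := by
  ext n
  induction n using Nat.strong_induction_on with
  | _ n ih =>
  match n, ih with
  | 0, _ => simp [hs0, ht0]
  | 1, _ => rw [hs1, ht1]
  | n + 2, ih =>
    have hn := congrArg (coeff (n + 2)) h
    rw [coeff_subst_self hs0 hs1, coeff_subst_self ht0 ht1] at hn
    have hsum : ∀ i ∈ Finset.range n, coeff (i + 2) s * coeff (n + 2) (s ^ (i + 2))
        = coeff (i + 2) t * coeff (n + 2) (t ^ (i + 2)) := fun i hi => by
      rw [ih _ (by have := Finset.mem_range.mp hi; omega),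
        coeff_pow_eq_of_coeff_eq hs0 ht0 ih (by omega)]
    rw [Finset.sum_congr rfl hsum, add_left_inj] at hn
    exact nsmul_right_injective two_ne_zero (by simpa [two_nsmul, two_mul] using hn)

theorem subst_eq_X_of_subst_eq_X {f g : R⟦X⟧} (hg : constantCoeff g = 0)
    (hg1 : IsUnit (coeff 1 g)) (h : subst g f = X) : subst f g = X := by
  set k := g.substInvOfIsUnit hg1
  have hk : constantCoeff k = 0 := constantCoeff_substInvOfIsUnit g hg1
  have hfk : f = k := by
    calc f = subst (subst k g) f := by rw [subst_substInvOfIsUnit_right g hg hg1, X_subst]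
      _ = k := by rw [← subst_subst hg hk, h, subst_X (HasSubst.of_constantCoeff_zero' hk)]
  rw [hfk, subst_substInvOfIsUnit_right g hg hg1]

theorem subst_eq_X_of_subst_subst_self_eq_X [IsAddTorsionFree R] {g h : R⟦X⟧}
    (hg0 : constantCoeff g = 0) (hh0 : constantCoeff h = 0) (hg1 : coeff 1 g = 1)
    (hh1 : coeff 1 h = 1) (hgh : subst (subst h h) (subst g g) = X) : subst h g = X := by
  have hu : IsUnit (coeff 1 h) := hh1 ▸ isUnit_one
  set k := h.substInvOfIsUnit hu
  have hk0 : constantCoeff k = 0 := constantCoeff_substInvOfIsUnit h hu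
  have hhk : subst k h = X := subst_substInvOfIsUnit_right h hh0 hu
  have hkh : subst h k = X := subst_substInvOfIsUnit_left h hh0 hu
  have hk1 : coeff 1 k = 1 := by
    simpa [coeff_one_subst hh0, hh1] using congrArg (coeff 1) hkh
  have hkk0 : constantCoeff (subst k k) = 0 := constantCoeff_subst_eq_zero hk0 k hk0
  have hρk : subst (subst k k) (subst h h) = X := by
    rw [← subst_subst hk0 hk0, subst_subst hh0 hk0, hhk, X_subst, hhk]
  have hgk : subst g g = subst k k := by
    calc subst g g = subst (subst (subst k k) (subst h h)) (subst g g) := by rw [hρk, X_subst]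
      _ = subst k k := by
        rw [← subst_subst (constantCoeff_subst_eq_zero hh0 h hh0) hkk0, hgh,
          subst_X (HasSubst.of_constantCoeff_zero' hkk0)]
  rw [eq_of_subst_self_eq_subst_self hg0 hk0 hg1 hk1 hgk, hkh]

/-- `f (ω f(t)) = ω t`: `f` is reversed by `t ↦ ω t`. -/
def ReversedByScaling (ω : R) (f : R⟦X⟧) : Prop :=
  subst (C ω * f) f = C ω * X

theorem ReversedByScaling.of_subst_self [IsAddTorsionFree R] {ω : Rˣ} {h : R⟦X⟧}
    (h0 : constantCoeff h = 0) (h1 : coeff 1 h = 1)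
    (hrev : ReversedByScaling (ω : R) (subst h h)) : ReversedByScaling (ω : R) h := by
  have hR0 : constantCoeff (C (ω : R) * X) = 0 := by simp
  set ρ := subst h h
  have hρ0 : constantCoeff ρ = 0 := constantCoeff_subst_eq_zero h0 h h0
  -- `g t = ω⁻¹ h(ω t)` squares to the inverse of `ρ`, so it is the inverse of `h`.
  set g := C (↑ω⁻¹ : R) * subst (C (ω : R) * X) h with hg
  have hg0 : constantCoeff g = 0 := by
    rw [hg, map_mul]
    exact mul_eq_zero_of_right _ (constantCoeff_subst_eq_zero hR0 h h0)
  have hg1 : coeff 1 g = 1 := by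
    simp [hg, coeff_one_subst hR0, h1]
  have hCg : C (ω : R) * g = subst (C (ω : R) * X) h := by
    rw [hg, C_mul_C_inv_mul]
  have hgg : subst g g = C (↑ω⁻¹ : R) * subst (C (ω : R) * X) ρ := by
    rw [hg, C_mul_subst hg0, subst_subst hR0 hg0, subst_C_mul_X hg0, hCg,
      subst_subst h0 hR0]
  have hggρ : subst ρ (subst g g) = X := by
    rw [hgg, C_mul_subst hρ0, subst_subst hR0 hρ0, subst_C_mul_X hρ0, hrev, C_inv_mul_C_mul]
  have hhg : subst h g = C (↑ω⁻¹ : R) * subst (C (ω : R) * h) h := by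
    rw [hg, C_mul_subst h0, subst_subst hR0 h0, subst_C_mul_X h0]
  calc subst (C (ω : R) * h) h = C (ω : R) * subst h g := by rw [hhg, C_mul_C_inv_mul]
    _ = C (ω : R) * X := by rw [subst_eq_X_of_subst_subst_self_eq_X hg0 h0 hg1 h1 hggρ]

theorem ReversedByScaling.mul_subst_eq_one {ω : Rˣ} {w : R⟦X⟧}
    (hrev : ReversedByScaling (ω : R) (X * w)) : w * subst (C (ω : R) * (X * w)) w = 1 := by
  have hb0 : constantCoeff (C (ω : R) * (X * w)) = 0 := by simp
  rw [ReversedByScaling, X_mul_subst hb0, mul_assoc, mul_assoc] at hrev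
  have := congrArg (C (↑ω⁻¹ : R) * ·) hrev
  simp only [C_inv_mul_C_mul] at this
  exact X_mul_cancel (by rw [this, mul_one])

theorem ReversedByScaling.mul_subst_eq_one_of_half_iterate [IsAddTorsionFree R] {ω : Rˣ}
    {u v φ : R⟦X⟧} (hu0 : constantCoeff u = 1) (hv0 : constantCoeff v = 1)
    (hrev : ReversedByScaling (ω : R) (X * u)) (hhalf : subst (X * v) (X * v) = X * u)
    (hφ : φ * v = u) :
    v * subst (C (↑ω⁻¹ : R) * (X * u)) φ = 1 ∧ φ * subst (C (↑ω⁻¹ : R) * (X * u)) v = 1 := by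
  set a := C (↑ω⁻¹ : R) * (X * u)
  set b := C (ω : R) * (X * u)
  have ha0 : constantCoeff a = 0 := by simp [a]
  have hb0 : constantCoeff b = 0 := by simp [b]
  have hh0 : constantCoeff (X * v) = 0 := by simp
  have hh1 : coeff 1 (X * v) = 1 := by simp [hv0]
  have hv : v * subst (C (ω : R) * (X * v)) v = 1 :=
    (ReversedByScaling.of_subst_self hh0 hh1 (hhalf ▸ hrev)).mul_subst_eq_one
  have hvh : v * subst (X * v) v = u :=
    X_mul_cancel (by rw [← mul_assoc, ← X_mul_subst hh0, hhalf])
  have hvb : subst (X * v) v * subst b v = 1 := by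
    have := congrArg (subst (X * v)) hv
    rwa [subst_mul (HasSubst.of_constantCoeff_zero' hh0), subst_subst (by simp) hh0,
      C_mul_subst hh0, hhalf, subst_one] at this
  have hba : subst a b = X :=
    subst_eq_X_of_subst_eq_X hb0 (by simp [b, hu0]) (by rw [C_mul_subst hb0, hrev, C_inv_mul_C_mul])
  have hua : subst a u * u = 1 := by
    have := congrArg (subst a) hrev.mul_subst_eq_one
    rwa [subst_mul (HasSubst.of_constantCoeff_zero' ha0), subst_subst hb0 ha0, hba, X_subst,
      subst_one] at this
  have hva : subst a u * v = subst a v := by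
    have := congrArg (subst a) (show u * subst b v = v by rw [← hvh, mul_assoc, hvb, mul_one])
    rwa [subst_mul (HasSubst.of_constantCoeff_zero' ha0), subst_subst hb0 ha0, hba,
      X_subst] at this
  have hφa : subst a φ * subst a v = subst a u := by
    rw [← subst_mul (HasSubst.of_constantCoeff_zero' ha0), hφ]
  constructor
  · linear_combination (1 - v * subst a φ) * hua + (subst a φ * u) * hva + u * hφa
  · linear_combination hua - φ * hva + subst a u * hφ

end PowerSeries

namespace MvPowerSeries

variable {σ τ R : Type*} [CommRing R]

theorem coeff_pow_eq_zero_of_degree_lt {q : MvPowerSeries σ R} (hq : constantCoeff q = 0)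
    {d : σ →₀ ℕ} {j : ℕ} (h : d.degree < j) : coeff d (q ^ j) = 0 :=
  coeff_of_lt_order ((Nat.cast_lt.mpr h).trans_le (le_order_pow_of_constantCoeff_eq_zero j hq))

theorem coeff_prod_pow_eq_zero_of_degree_lt {G : τ → MvPowerSeries σ R}
    (hG : ∀ i, constantCoeff (G i) = 0) {d : σ →₀ ℕ} {e : τ →₀ ℕ} (h : d.degree < e.degree) :
    coeff d (e.prod fun i k => G i ^ k) = 0 := by
  refine coeff_of_lt_order ((Nat.cast_lt.mpr h).trans_le ?_)
  calc (e.degree : ℕ∞) = ∑ i ∈ e.support, (e i : ℕ∞) := by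
        rw [Finsupp.degree_apply, Nat.cast_sum]
    _ ≤ ∑ i ∈ e.support, (G i ^ e i).order :=
        Finset.sum_le_sum fun i _ => le_order_pow_of_constantCoeff_eq_zero _ (hG i)
    _ ≤ _ := le_order_prod _ _

theorem subst_X_mul_subst_X_mul_X {G : Fin 2 → MvPowerSeries (Fin 2) R} (hG : HasSubst G)
    (i : Fin 2) (φ : PowerSeries R) :
    subst G (X i * φ.subst (X 0 * X 1 : MvPowerSeries (Fin 2) R)) =
      G i * φ.subst (G 0 * G 1) := by
  rw [subst_mul hG, subst_X hG, PowerSeries.subst, PowerSeries.subst,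
    subst_comp_subst_apply (PowerSeries.HasSubst.of_constantCoeff_zero (by simp)).const hG,
    subst_mul hG, subst_X hG, subst_X hG]

def normalFormMap (φ ψ : PowerSeries R) : Fin 2 → MvPowerSeries (Fin 2) R :=
  ![X 0 * φ.subst (X 0 * X 1 : MvPowerSeries (Fin 2) R),
    X 1 * ψ.subst (X 0 * X 1 : MvPowerSeries (Fin 2) R)]

def scaledSwap (c : R) : Fin 2 → MvPowerSeries (Fin 2) R :=
  ![C c * X 1, C c * X 0]

theorem constantCoeff_normalFormMap (φ ψ : PowerSeries R) (i : Fin 2) :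
    constantCoeff (normalFormMap φ ψ i) = 0 := by
  fin_cases i <;> simp [normalFormMap]

theorem constantCoeff_scaledSwap (c : R) (i : Fin 2) : constantCoeff (scaledSwap c i) = 0 := by
  fin_cases i <;> simp [scaledSwap]

theorem subst_scaledSwap {G : Fin 2 → MvPowerSeries (Fin 2) R} (hG : HasSubst G) (c : R) :
    (fun i => subst G (scaledSwap c i)) = ![C c * G 1, C c * G 0] := by
  ext i : 1
  fin_cases i <;> simp [scaledSwap, subst_mul hG, subst_X hG]

theorem normalFormMap_reversedBy_scaledSwap {c : R} {φ ψ : PowerSeries R}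
    (h₁ : ψ * φ.subst (PowerSeries.C (c * c) * (PowerSeries.X * (φ * ψ))) = 1)
    (h₂ : φ * ψ.subst (PowerSeries.C (c * c) * (PowerSeries.X * (φ * ψ))) = 1) :
    (fun i => subst (fun j => subst (normalFormMap φ ψ) (scaledSwap c j))
      (normalFormMap φ ψ i)) = scaledSwap c := by
  let p : MvPowerSeries (Fin 2) R := X 0 * X 1
  let a := PowerSeries.C (c * c) * (PowerSeries.X * (φ * ψ))
  have hp : PowerSeries.HasSubst p := PowerSeries.HasSubst.of_constantCoeff_zero (by simp [p])
  have ha : PowerSeries.HasSubst a := PowerSeries.HasSubst.of_constantCoeff_zero' (by simp [a])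
  rw [subst_scaledSwap (hasSubst_of_constantCoeff_zero (constantCoeff_normalFormMap φ ψ))]
  let G := ![C c * normalFormMap φ ψ 1, C c * normalFormMap φ ψ 0]
  have hG : HasSubst G := hasSubst_of_constantCoeff_zero fun i => by
    fin_cases i <;> simp [G, constantCoeff_normalFormMap]
  have hGG : G 0 * G 1 = PowerSeries.subst p a := by
    simp only [G, a, p, normalFormMap, Matrix.cons_val_zero, Matrix.cons_val_one,
      Matrix.cons_val_fin_one, map_mul, PowerSeries.subst_mul hp, PowerSeries.subst_C,
      PowerSeries.subst_X hp]
    ring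
  have hcomp (f : PowerSeries R) :
      PowerSeries.subst (PowerSeries.subst p a) f = PowerSeries.subst p (PowerSeries.subst a f) :=
    (PowerSeries.subst_comp_subst_apply ha hp f).symm
  funext i
  fin_cases i
  · calc subst G (normalFormMap φ ψ 0) = G 0 * φ.subst (G 0 * G 1) :=
          subst_X_mul_subst_X_mul_X hG 0 φ
      _ = C c * X 1 * PowerSeries.subst p (ψ * PowerSeries.subst a φ) := by
          rw [hGG, hcomp, PowerSeries.subst_mul hp]
          simp only [G, p, normalFormMap, Matrix.cons_val_zero, Matrix.cons_val_one,
            Matrix.cons_val_fin_one]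
          ring
      _ = scaledSwap c 0 := by
          rw [h₁, PowerSeries.subst_one, mul_one]
          rfl
  · calc subst G (normalFormMap φ ψ 1) = G 1 * ψ.subst (G 0 * G 1) :=
          subst_X_mul_subst_X_mul_X hG 1 ψ
      _ = C c * X 0 * PowerSeries.subst p (φ * PowerSeries.subst a ψ) := by
          rw [hGG, hcomp, PowerSeries.subst_mul hp]
          simp only [G, p, normalFormMap, Matrix.cons_val_zero, Matrix.cons_val_one,
            Matrix.cons_val_fin_one]
          ring
      _ = scaledSwap c 1 := by
          rw [h₂, PowerSeries.subst_one, mul_one]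
          rfl

end MvPowerSeries

theorem compP_eq_subst {g : PowerSeries ℂ} (hg : PowerSeries.constantCoeff g = 0)
    (f : PowerSeries ℂ) : compP f g = f.subst g := by
  ext n
  rw [PowerSeries.coeff_subst_eq_sum_range hg, compP, PowerSeries.coeff_mk]

theorem degreeOf_eq_degree {n : ℕ} (d : Fin n →₀ ℕ) : degreeOf d = d.degree := rfl

theorem substPM_eq_subst {q : MvPowerSeries (Fin 2) ℂ}
    (hq : MvPowerSeries.constantCoeff q = 0) (φ : PowerSeries ℂ) :
    substPM q φ = φ.subst q := by
  ext d
  rw [PowerSeries.coeff_subst (PowerSeries.HasSubst.of_constantCoeff_zero hq),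
    finsum_eq_sum_of_support_subset (s := Finset.range (degreeOf d + 1))]
  · rfl
  intro j hj
  rw [Finset.coe_range, Set.mem_Iio, Nat.lt_succ_iff, degreeOf_eq_degree]
  by_contra! hdj
  exact hj (smul_eq_zero_of_right _ (MvPowerSeries.coeff_pow_eq_zero_of_degree_lt hq hdj))

theorem substM_eq_subst {n : ℕ} {G : FormalMap n}
    (hG : ∀ i, MvPowerSeries.constantCoeff (G i) = 0) (f : MvPowerSeries (Fin n) ℂ) :
    substM G f = MvPowerSeries.subst G f := by
  ext d
  rw [MvPowerSeries.coeff_subst (MvPowerSeries.hasSubst_of_constantCoeff_zero hG),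
    finsum_eq_sum_of_support_subset
      (s := Finset.Iic (Finsupp.equivFunOnFinite.symm fun _ => degreeOf d))]
  · simp only [Finsupp.prod_fintype _ _ (fun _ => pow_zero _), smul_eq_mul]
    rfl
  intro e he
  rw [Finset.coe_Iic, Set.mem_Iic]
  by_contra hed
  obtain ⟨i, hi⟩ : ∃ i, degreeOf d < e i := by
    simpa [Finsupp.le_def] using hed
  exact he (smul_eq_zero_of_right _ (MvPowerSeries.coeff_prod_pow_eq_zero_of_degree_lt hG
    (hi.trans_le (Finsupp.le_degree i e))))

theorem compM_eq_subst {n : ℕ} (F : FormalMap n) {G : FormalMap n}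
    (hG : ∀ i, MvPowerSeries.constantCoeff (G i) = 0) :
    compM F G = fun i => MvPowerSeries.subst G (F i) :=
  funext fun i => substM_eq_subst hG (F i)

/-- Let ρ = X·u (tangent to the identity) be reversed by the rotation t ↦ ωt with
ω = c⁻², i.e. ρ(ωρ(t)) = ωt, and let ρ^{1/2} = X·v be its formal square root iterate
(ρ^{1/2} ∘ ρ^{1/2} = ρ).  Then F = (z₁ρ(p)/ρ^{1/2}(p), z₂ρ^{1/2}(p)/p), p = z₁z₂, is
reversed by J_c(z₁,z₂) = (cz₂, cz₁): equivalently F ∘ J_c ∘ F = J_c. -/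
theorem Jc_reverses_normal_form (c : ℂ) (hc : c ≠ 0) (u v : PowerSeries ℂ)
    (hu0 : PowerSeries.constantCoeff u = 1)
    (hv0 : PowerSeries.constantCoeff v = 1)
    (hrev : compP (PowerSeries.X * u)
        (PowerSeries.C (c * c)⁻¹ * (PowerSeries.X * u)) =
      PowerSeries.C (c * c)⁻¹ * PowerSeries.X)
    (hhalf : compP (PowerSeries.X * v) (PowerSeries.X * v) = PowerSeries.X * u) :
    compM ![MvPowerSeries.X 0 * substPM pXY (u * v⁻¹), MvPowerSeries.X 1 * substPM pXY v]
        (compM ![MvPowerSeries.C c * MvPowerSeries.X 1,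
                 MvPowerSeries.C c * MvPowerSeries.X 0]
          ![MvPowerSeries.X 0 * substPM pXY (u * v⁻¹), MvPowerSeries.X 1 * substPM pXY v]) =
      ![MvPowerSeries.C c * MvPowerSeries.X 1,
        MvPowerSeries.C c * MvPowerSeries.X 0] := by
  let ω := Units.mk0 (c * c)⁻¹ (inv_ne_zero (mul_ne_zero hc hc))
  rw [compP_eq_subst (by simp)] at hrev hhalf
  have hφ : u * v⁻¹ * v = u := by
    rw [mul_assoc, PowerSeries.inv_mul_cancel v (by simp [hv0]), mul_one]
  obtain ⟨h₁, h₂⟩ := PowerSeries.ReversedByScaling.mul_subst_eq_one_of_half_iterate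
    (ω := ω) hu0 hv0 hrev hhalf hφ
  rw [Units.val_inv_eq_inv_val, Units.val_mk0, inv_inv] at h₁ h₂
  have hN : ![MvPowerSeries.X 0 * substPM pXY (u * v⁻¹), MvPowerSeries.X 1 * substPM pXY v] =
      MvPowerSeries.normalFormMap (u * v⁻¹) v := by
    simp only [substPM_eq_subst (show MvPowerSeries.constantCoeff pXY = 0 by simp [pXY])]
    rfl
  have hJ : ![MvPowerSeries.C c * MvPowerSeries.X 1, MvPowerSeries.C c * MvPowerSeries.X 0] =
      MvPowerSeries.scaledSwap c := rfl
  have hN0 := MvPowerSeries.constantCoeff_normalFormMap (u * v⁻¹) v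
  have hJN0 (i : Fin 2) := MvPowerSeries.constantCoeff_subst_eq_zero
    (MvPowerSeries.hasSubst_of_constantCoeff_zero hN0) hN0
    (MvPowerSeries.constantCoeff_scaledSwap c i)
  rw [hN, hJ, compM_eq_subst _ hN0, compM_eq_subst _ hJN0]
  exact MvPowerSeries.normalFormMap_reversedBy_scaledSwap (by rw [hφ]; exact h₁)
    (by rw [hφ]; exact h₂)

end
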